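/- arXiv:2010.15758 — 3 statements merged into one kernel-verified Lean document; each statement's English description precedes it below -/
import Mathlib

section
/- For π = 21[ι_a, ι_b] = (1+b)(2+b)…(a+b)12…b in S_{a+b}, the number of disjoint pairs of inversions is |I_2(π)| = 2·C(a,2)·C(b,2) and π contains no 321-pattern, so |L_2(π)| = 2·C(a,2)·C(b,2). -/
/-- The adjacent transposition `s_j = (j, j+1)` (1-indexed) acting on `Fin n`. -/
def sgen (n j : ℕ) : Equiv.Perm (Fin n) :=
  if h : 1 ≤ j ∧ j < n then
    Equiv.swap ⟨j - 1, lt_of_le_of_lt (Nat.pred_le j) h.2⟩ ⟨j, h.2⟩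
  else 1

/-- The permutation obtained as the product `s_{w₁} s_{w₂} ⋯ s_{w_k}`. -/
def wordProd (n : ℕ) (w : List ℕ) : Equiv.Perm (Fin n) :=
  (w.map (sgen n)).prod

/-- A word in the generators `s_1, …, s_{n-1}`. -/
def IsWord (n : ℕ) (w : List ℕ) : Prop := ∀ j ∈ w, 1 ≤ j ∧ j < n

/-- `w` is a reduced word for `π`: a minimal-length word whose product is `π`. -/
def IsReducedWord (n : ℕ) (π : Equiv.Perm (Fin n)) (w : List ℕ) : Prop :=
  IsWord n w ∧ wordProd n w = π ∧
    ∀ w', IsWord n w' → wordProd n w' = π → w.length ≤ w'.length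

/-- Commutation move: swap adjacent letters `i j` with `|i - j| > 1`. -/
def CommMove (w w' : List ℕ) : Prop :=
  ∃ l r i j, (i + 1 < j ∨ j + 1 < i) ∧ w = l ++ [i, j] ++ r ∧ w' = l ++ [j, i] ++ r

/-- Long braid move: exchange factors `j (j+1) j` and `(j+1) j (j+1)`. -/
def BraidMove (w w' : List ℕ) : Prop :=
  ∃ l r j, (w = l ++ [j, j+1, j] ++ r ∧ w' = l ++ [j+1, j, j+1] ++ r) ∨
    (w = l ++ [j+1, j, j+1] ++ r ∧ w' = l ++ [j, j+1, j] ++ r)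

/-- The graph `G_π` on reduced words of `π`, edges given by single commutation
or long braid moves. -/
def redWordGraph (n : ℕ) (π : Equiv.Perm (Fin n)) :
    SimpleGraph {w : List ℕ // IsReducedWord n π w} :=
  SimpleGraph.fromRel (fun w w' => CommMove w.1 w'.1 ∨ BraidMove w.1 w'.1)

/-- The number of inversions of `π`. -/
def invCount (n : ℕ) (π : Equiv.Perm (Fin n)) : ℕ :=
  (Finset.univ.filter (fun p : Fin n × Fin n => p.1 < p.2 ∧ π p.2 < π p.1)).card

/-- `|I₂(π)|`: the number of unordered pairs of inversions of `π` with disjoint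
index sets (each pair counted once, normalized by first indices). -/
def I2count (n : ℕ) (π : Equiv.Perm (Fin n)) : ℕ :=
  (Finset.univ.filter (fun q : (Fin n × Fin n) × (Fin n × Fin n) =>
    (q.1.1 < q.1.2 ∧ π q.1.2 < π q.1.1) ∧ (q.2.1 < q.2.2 ∧ π q.2.2 < π q.2.1) ∧
    q.1.1 < q.2.1 ∧
    ({q.1.1, q.1.2} ∩ {q.2.1, q.2.2} : Finset (Fin n)) = ∅)).card

/-- `|I₃(π)|`: the number of `321`-patterns, i.e. triples `i < j < k` with
`π i > π j > π k`. -/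
def I3count (n : ℕ) (π : Equiv.Perm (Fin n)) : ℕ :=
  (Finset.univ.filter (fun t : Fin n × Fin n × Fin n =>
    t.1 < t.2.1 ∧ t.2.1 < t.2.2 ∧ π t.2.2 < π t.2.1 ∧ π t.2.1 < π t.1)).card

/-- The direct sum (12-inflation) `12[α, β]` of two permutations. -/
def dsum {a b : ℕ} (α : Equiv.Perm (Fin a)) (β : Equiv.Perm (Fin b)) :
    Equiv.Perm (Fin (a + b)) :=
  finSumFinEquiv.permCongr (Equiv.sumCongr α β)

/-- `π` avoids the pattern `312`. -/
def Avoids312 (n : ℕ) (π : Equiv.Perm (Fin n)) : Prop :=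
  ¬ ∃ i j k : Fin n, i < j ∧ j < k ∧ π j < π k ∧ π k < π i

/-- `x ∈ Ballot_{a,b}`: a rearrangement of the multiset `{1^b, …, a^b}` in which
every prefix contains at least as many `j`'s as `k`'s whenever `j < k`. -/
def IsBallot (a b : ℕ) (x : List ℕ) : Prop :=
  (∀ j ∈ x, 1 ≤ j ∧ j ≤ a) ∧ (∀ j, 1 ≤ j → j ≤ a → x.count j = b) ∧
  (∀ j k m, j < k → (x.take m).count k ≤ (x.take m).count j)

/-- `y ∈ RBallot_{b,a}`: a rearrangement of the multiset `{1^a, …, b^a}` in which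
every prefix contains at most as many `j`'s as `k`'s whenever `j < k`. -/
def IsRBallot (b a : ℕ) (y : List ℕ) : Prop :=
  (∀ j ∈ y, 1 ≤ j ∧ j ≤ b) ∧ (∀ j, 1 ≤ j → j ≤ b → y.count j = a) ∧
  (∀ j k m, j < k → (y.take m).count j ≤ (y.take m).count k)

/-- The map `f` on ballot sequences: `y_i = b - N_{x_i}(x_1 … x_{i-1})`. -/
def ballotMap (b : ℕ) (x : List ℕ) : List ℕ :=
  x.mapIdx (fun i xi => b - (x.take i).count xi)

/-- The graph on ballot sequences in `Ballot_{a,b}`, with edges given by swapping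
adjacent letters `p q` with `p > q`, or `p < q` and strictly more `p`'s than `q`'s
in the preceding prefix. -/
def ballotGraph (a b : ℕ) : SimpleGraph {x : List ℕ // IsBallot a b x} :=
  SimpleGraph.fromRel (fun x y => ∃ l r p q,
    x.1 = l ++ [p, q] ++ r ∧ y.1 = l ++ [q, p] ++ r ∧
    (q < p ∨ (p < q ∧ l.count q < l.count p)))

/-- Rotation of a permutation (matrix) by 180 degrees:
`r₁₈₀(π)(i) = n - π(n - i + 1) + 1` (in 0-indexed terms, conjugation by reversal). -/
def rot180 (n : ℕ) (π : Equiv.Perm (Fin n)) : Equiv.Perm (Fin n) :=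
  Fin.revPerm.trans (π.trans Fin.revPerm)

lemma two_mul_choose_two (m : ℕ) : 2 * m.choose 2 = m * (m - 1) := by
  induction m with
  | zero => rfl
  | succ k ih =>
    rw [Nat.choose_succ_succ, Nat.mul_add, ih, Nat.choose_one_right]
    cases k with
    | zero => rfl
    | succ j =>
      simp only [Nat.succ_sub_one]
      ring

lemma card_lt_pairs {α : Type*} [LinearOrder α] (s : Finset α) :
    ((s ×ˢ s).filter fun p => p.1 < p.2).card = (s.card).choose 2 := by
  have hsplit : s.offDiag =
      ((s ×ˢ s).filter fun p => p.1 < p.2) ∪ ((s ×ˢ s).filter fun p => p.2 < p.1) := by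
    ext p
    simp only [Finset.mem_offDiag, Finset.mem_union, Finset.mem_filter, Finset.mem_product,
      ne_iff_lt_or_gt]
    tauto
  have hdisj : Disjoint ((s ×ˢ s).filter fun p : α × α => p.1 < p.2)
      ((s ×ˢ s).filter fun p => p.2 < p.1) := by
    rw [Finset.disjoint_left]
    intro p hp hp'
    simp only [Finset.mem_filter] at hp hp'
    exact absurd (hp.2.trans hp'.2) (lt_irrefl _)
  have hcardeq : ((s ×ˢ s).filter fun p : α × α => p.1 < p.2).card =
      ((s ×ˢ s).filter fun p => p.2 < p.1).card := by
    apply Finset.card_equiv (Equiv.prodComm α α)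
    intro p
    simp only [Finset.mem_filter, Finset.mem_product, Equiv.prodComm_apply, Prod.fst_swap,
      Prod.snd_swap]
    tauto
  have hoff := Finset.offDiag_card s
  rw [hsplit, Finset.card_union_of_disjoint hdisj, ← hcardeq] at hoff
  have h2 := two_mul_choose_two s.card
  have h3 : s.card * (s.card - 1) = s.card * s.card - s.card := Nat.mul_pred ..
  omega

lemma card_filter_lt_a (a b : ℕ) :
    ((Finset.univ : Finset (Fin (a + b))).filter fun i : Fin (a+b) => (i : ℕ) < a).card = a := by
  have h : ((Finset.univ : Finset (Fin (a + b))).filter fun i : Fin (a+b) => (i : ℕ) < a).card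
      = (Finset.univ : Finset (Fin a)).card := by
    refine Finset.card_bij' (fun x hx => (⟨(x : ℕ), by simpa using hx⟩ : Fin a))
        (fun y _ => (⟨(y : ℕ), lt_of_lt_of_le y.isLt (Nat.le_add_right a b)⟩ : Fin (a + b)))
        ?_ ?_ ?_ ?_
    · intro x hx; exact Finset.mem_univ _
    · intro y hy
      simp only [Finset.mem_filter, Finset.mem_univ, true_and]
      exact y.isLt
    · intro x hx; rfl
    · intro y hy; rfl
  rw [h, Finset.card_univ, Fintype.card_fin]

lemma card_filter_ge_a (a b : ℕ) :
    ((Finset.univ : Finset (Fin (a + b))).filter fun i : Fin (a+b) => a ≤ (i : ℕ)).card = b := by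
  have h : ((Finset.univ : Finset (Fin (a + b))).filter fun i : Fin (a+b) => a ≤ (i : ℕ)).card
      = (Finset.univ : Finset (Fin b)).card := by
    refine Finset.card_bij' (fun x hx => (⟨(x : ℕ) - a, by
        have h1 := x.isLt
        have h2 : a ≤ (x : ℕ) := by simpa using hx
        omega⟩ : Fin b))
        (fun y _ => (⟨(y : ℕ) + a, by have := y.isLt; omega⟩ : Fin (a + b)))
        ?_ ?_ ?_ ?_
    · intro x hx; exact Finset.mem_univ _
    · intro y hy
      simp only [Finset.mem_filter, Finset.mem_univ, true_and]
      omega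
    · intro x hx
      simp only [Finset.mem_filter, Finset.mem_univ, true_and] at hx
      apply Fin.ext; simp; omega
    · intro y hy; apply Fin.ext; simp
  rw [h, Finset.card_univ, Fintype.card_fin]

/-- for `π = 21[ι_a, ι_b]`, `|I₂(π)| = 2·C(a,2)·C(b,2)`, `π` has no
`321`-pattern, hence `|L₂(π)| = 2·C(a,2)·C(b,2)`. -/
theorem L2count_21_iota (a b : ℕ) (π : Equiv.Perm (Fin (a + b)))
    (hπ : ∀ i : Fin (a + b),
      ((π i : Fin (a + b)) : ℕ) = if (i : ℕ) < a then (i : ℕ) + b else (i : ℕ) - a) :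
    I2count (a + b) π = 2 * Nat.choose a 2 * Nat.choose b 2 ∧
    I3count (a + b) π = 0 ∧
    I2count (a + b) π + I3count (a + b) π = 2 * Nat.choose a 2 * Nat.choose b 2 := by
  have hlt : ∀ i j : Fin (a + b), (i < j ∧ π j < π i) ↔ ((i : ℕ) < a ∧ a ≤ (j : ℕ)) := by
    intro i j
    have hi := hπ i; have hj := hπ j
    have hi2 := i.isLt; have hj2 := j.isLt
    simp only [Fin.lt_def]
    split_ifs at hi hj <;> omega
  have h3 : I3count (a + b) π = 0 := by
    unfold I3count
    rw [Finset.card_eq_zero, Finset.filter_eq_empty_iff]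
    rintro t _ ⟨h1, h2, h3, h4⟩
    have e1 := (hlt t.1 t.2.1).mp ⟨h1, h4⟩
    have e2 := (hlt t.2.1 t.2.2).mp ⟨h2, h3⟩
    omega
  have h2 : I2count (a + b) π = 2 * Nat.choose a 2 * Nat.choose b 2 := by
    unfold I2count
    have hfe : (Finset.univ.filter (fun q : (Fin (a+b) × Fin (a+b)) × (Fin (a+b) × Fin (a+b)) =>
        (q.1.1 < q.1.2 ∧ π q.1.2 < π q.1.1) ∧ (q.2.1 < q.2.2 ∧ π q.2.2 < π q.2.1) ∧
        q.1.1 < q.2.1 ∧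
        ({q.1.1, q.1.2} ∩ {q.2.1, q.2.2} : Finset (Fin (a+b))) = ∅)) =
      (Finset.univ.filter (fun q : (Fin (a+b) × Fin (a+b)) × (Fin (a+b) × Fin (a+b)) =>
        ((q.1.1 : ℕ) < a ∧ (q.2.1 : ℕ) < a ∧ q.1.1 < q.2.1) ∧
        (a ≤ (q.1.2 : ℕ) ∧ a ≤ (q.2.2 : ℕ) ∧ q.1.2 ≠ q.2.2))) := by
      ext ⟨⟨i1, j1⟩, ⟨i2, j2⟩⟩
      simp only [Finset.mem_filter, Finset.mem_univ, true_and]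
      rw [hlt, hlt]
      have hint : ({i1, j1} ∩ {i2, j2} : Finset (Fin (a+b))) = ∅ ↔
          (i1 ≠ i2 ∧ i1 ≠ j2 ∧ j1 ≠ i2 ∧ j1 ≠ j2) := by
        simp only [Finset.eq_empty_iff_forall_notMem, Finset.mem_inter, Finset.mem_insert,
          Finset.mem_singleton, not_and, not_or]
        constructor
        · intro h
          refine ⟨fun e => ?_, fun e => ?_, fun e => ?_, fun e => ?_⟩
          · exact (h i1 (Or.inl rfl)).1 e
          · exact (h i1 (Or.inl rfl)).2 e
          · exact (h j1 (Or.inr rfl)).1 e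
          · exact (h j1 (Or.inr rfl)).2 e
        · rintro ⟨e1, e2, e3, e4⟩ x (rfl | rfl) <;> exact ⟨by tauto, by tauto⟩
      rw [hint]
      simp only [Fin.lt_def, ne_eq, Fin.ext_iff]
      omega
    rw [hfe]
    have hsplit : (Finset.univ.filter (fun q : (Fin (a+b) × Fin (a+b)) × (Fin (a+b) × Fin (a+b)) =>
        ((q.1.1 : ℕ) < a ∧ (q.2.1 : ℕ) < a ∧ q.1.1 < q.2.1) ∧
        (a ≤ (q.1.2 : ℕ) ∧ a ≤ (q.2.2 : ℕ) ∧ q.1.2 ≠ q.2.2))).card =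
      (Finset.univ.filter (fun r : (Fin (a+b) × Fin (a+b)) × (Fin (a+b) × Fin (a+b)) =>
        ((r.1.1 : ℕ) < a ∧ (r.1.2 : ℕ) < a ∧ r.1.1 < r.1.2) ∧
        (a ≤ (r.2.1 : ℕ) ∧ a ≤ (r.2.2 : ℕ) ∧ r.2.1 ≠ r.2.2))).card := by
      apply Finset.card_equiv (Equiv.prodProdProdComm (Fin (a+b)) (Fin (a+b)) (Fin (a+b)) (Fin (a+b)))
      rintro ⟨⟨i1, j1⟩, ⟨i2, j2⟩⟩
      simp only [Finset.mem_filter, Finset.mem_univ, true_and, Equiv.prodProdProdComm,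
        Equiv.coe_fn_mk]
    have hprod : (Finset.univ.filter (fun r : (Fin (a+b) × Fin (a+b)) × (Fin (a+b) × Fin (a+b)) =>
        ((r.1.1 : ℕ) < a ∧ (r.1.2 : ℕ) < a ∧ r.1.1 < r.1.2) ∧
        (a ≤ (r.2.1 : ℕ) ∧ a ≤ (r.2.2 : ℕ) ∧ r.2.1 ≠ r.2.2))) =
      (Finset.univ.filter (fun p : Fin (a+b) × Fin (a+b) =>
        (p.1 : ℕ) < a ∧ (p.2 : ℕ) < a ∧ p.1 < p.2)) ×ˢ
      (Finset.univ.filter (fun p : Fin (a+b) × Fin (a+b) =>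
        a ≤ (p.1 : ℕ) ∧ a ≤ (p.2 : ℕ) ∧ p.1 ≠ p.2)) := by
      ext r
      simp only [Finset.mem_filter, Finset.mem_univ, true_and, Finset.mem_product]
    rw [hsplit, hprod, Finset.card_product]
    have hA : (Finset.univ.filter (fun p : Fin (a+b) × Fin (a+b) =>
        (p.1 : ℕ) < a ∧ (p.2 : ℕ) < a ∧ p.1 < p.2)).card = a.choose 2 := by
      have : (Finset.univ.filter (fun p : Fin (a+b) × Fin (a+b) =>
          (p.1 : ℕ) < a ∧ (p.2 : ℕ) < a ∧ p.1 < p.2)) =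
        ((Finset.univ.filter fun i : Fin (a+b) => (i : ℕ) < a) ×ˢ
         (Finset.univ.filter fun i : Fin (a+b) => (i : ℕ) < a)).filter fun p => p.1 < p.2 := by
        ext p
        simp only [Finset.mem_filter, Finset.mem_univ, true_and, Finset.mem_product]
        tauto
      rw [this, card_lt_pairs, card_filter_lt_a]
    have hB : (Finset.univ.filter (fun p : Fin (a+b) × Fin (a+b) =>
        a ≤ (p.1 : ℕ) ∧ a ≤ (p.2 : ℕ) ∧ p.1 ≠ p.2)).card = b * b - b := by
      have : (Finset.univ.filter (fun p : Fin (a+b) × Fin (a+b) =>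
          a ≤ (p.1 : ℕ) ∧ a ≤ (p.2 : ℕ) ∧ p.1 ≠ p.2)) =
        (Finset.univ.filter fun i : Fin (a+b) => a ≤ (i : ℕ)).offDiag := by
        ext p
        simp only [Finset.mem_filter, Finset.mem_univ, true_and, Finset.mem_offDiag]
      rw [this, Finset.offDiag_card, card_filter_ge_a]
    rw [hA, hB]
    have h2b := two_mul_choose_two b
    have h3b : b * (b - 1) = b * b - b := Nat.mul_pred ..
    have h4b : b * b - b = 2 * b.choose 2 := by omega
    rw [h4b]; ring
  exact ⟨h2, h3, by omega⟩
end

section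
/- If π = 21[α, ι_b] with α ∈ S_a (i.e., π = (α_1+b)…(α_a+b)12…b), then |I_2(π)| = |I_2(α)| + ℓ(α)(a−2)b + 2·C(a,2)·C(b,2) and |I_3(π)| = |I_3(α)| + ℓ(α)b; consequently |L_2(π)| = |L_2(α)| + ℓ(α)(a−1)b + 2·C(a,2)·C(b,2). -/
lemma pair_inter {γ : Type*} [DecidableEq γ] (x y z w : γ) :
    (({x, y} ∩ {z, w} : Finset γ) = ∅) ↔ ((x ≠ z ∧ x ≠ w) ∧ y ≠ z ∧ y ≠ w) := by
  simp only [Finset.eq_empty_iff_forall_notMem, Finset.mem_inter, Finset.mem_insert,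
    Finset.mem_singleton, not_and, not_or]
  constructor
  · intro h
    exact ⟨h x (Or.inl rfl), h y (Or.inr rfl)⟩
  · rintro ⟨⟨h1, h2⟩, h3, h4⟩ t ht
    rcases ht with rfl | rfl
    · exact ⟨h1, h2⟩
    · exact ⟨h3, h4⟩


lemma sum_range_id_choose (m : ℕ) : (∑ i ∈ Finset.range m, i) = m.choose 2 := by
  induction m with
  | zero => rfl
  | succ k ih =>
    rw [Finset.sum_range_succ, ih, Nat.choose_succ_succ, Nat.choose_one_right]
    have h2 : Nat.succ 1 = 2 := rfl
    rw [h2]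
    omega

lemma two_mul_choose_two_s9 (n : ℕ) : 2 * n.choose 2 + n = n * n := by
  induction n with
  | zero => rfl
  | succ k ih =>
    rw [Nat.choose_succ_succ, Nat.choose_one_right]
    have h2 : Nat.succ 1 = 2 := rfl
    rw [h2]
    have h1 : (k + 1) * (k + 1) = k * k + 2 * k + 1 := by ring
    omega

lemma pairs_count (n : ℕ) :
    (∑ x : Fin n, ∑ y : Fin n, if (x : ℕ) < (y : ℕ) then (1 : ℕ) else 0) = n.choose 2 := by
  rw [Finset.sum_comm]
  have h1 : ∀ y : Fin n, (∑ x : Fin n, if (x : ℕ) < (y : ℕ) then (1 : ℕ) else 0) = (y : ℕ) := by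
    intro y
    rw [Fin.sum_univ_eq_sum_range (fun i => if i < (y : ℕ) then (1 : ℕ) else 0)]
    rw [← Finset.card_filter]
    have h2 : (Finset.range n).filter (fun i => i < (y : ℕ)) = Finset.range (y : ℕ) := by
      ext t
      simp only [Finset.mem_filter, Finset.mem_range]
      have := y.isLt
      omega
    rw [h2, Finset.card_range]
  simp only [h1]
  rw [Fin.sum_univ_eq_sum_range (fun i => i)]
  exact sum_range_id_choose n

lemma ne_count (n : ℕ) :
    (∑ x : Fin n, ∑ y : Fin n, if ¬x = y then (1 : ℕ) else 0) = n * n - n := by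
  have h1 : ∀ x : Fin n, (∑ y : Fin n, if ¬x = y then (1 : ℕ) else 0) = n - 1 := by
    intro x
    rw [← Finset.card_filter]
    have h2 : Finset.univ.filter (fun y : Fin n => ¬x = y) = Finset.univ.erase x := by
      ext t
      simp [Finset.mem_erase, eq_comm]
    rw [h2, Finset.card_erase_of_mem (Finset.mem_univ _), Finset.card_univ, Fintype.card_fin]
  simp only [h1, Finset.sum_const, Finset.card_univ, Fintype.card_fin, smul_eq_mul]
  cases n with
  | zero => rfl
  | succ k =>
    have h0 : k + 1 - 1 = k := rfl
    rw [h0]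
    have : (k + 1) * (k + 1) = (k + 1) * k + (k + 1) := by ring
    omega

lemma count_aux {n : ℕ} (u v : Fin n) (huv : (u : ℕ) < (v : ℕ)) :
    ((∑ t : Fin n, if (t : ℕ) < (u : ℕ) ∧ ¬t = u ∧ ¬t = v then (1 : ℕ) else 0) +
      ∑ t : Fin n, if (u : ℕ) < (t : ℕ) ∧ ¬u = t ∧ ¬v = t then (1 : ℕ) else 0) = n - 2 := by
  rw [← Finset.card_filter, ← Finset.card_filter]
  rw [← Finset.card_union_of_disjoint (by
    rw [Finset.disjoint_left]
    intro t ht1 ht2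
    simp only [Finset.mem_filter] at ht1 ht2
    omega)]
  have h1 : (Finset.univ.filter (fun t : Fin n => (t : ℕ) < (u : ℕ) ∧ ¬t = u ∧ ¬t = v)) ∪
      (Finset.univ.filter (fun t : Fin n => (u : ℕ) < (t : ℕ) ∧ ¬u = t ∧ ¬v = t)) =
      Finset.univ \ {u, v} := by
    ext t
    simp only [Finset.mem_union, Finset.mem_filter, Finset.mem_sdiff, Finset.mem_insert,
      Finset.mem_singleton, Finset.mem_univ, true_and, Fin.ext_iff, not_or]
    omega
  rw [h1, Finset.card_sdiff_of_subset (Finset.subset_univ _), Finset.card_univ, Fintype.card_fin]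
  have huv2 : u ∉ ({v} : Finset (Fin n)) := by
    simp only [Finset.mem_singleton, Fin.ext_iff]
    omega
  rw [Finset.card_insert_of_notMem huv2, Finset.card_singleton]


set_option maxHeartbeats 2000000 in
/-- for `π = 21[α, ι_b]` with `α ∈ S_a`,
`|I₂(π)| = |I₂(α)| + ℓ(α)(a-2)b + 2·C(a,2)·C(b,2)`,
`|I₃(π)| = |I₃(α)| + ℓ(α)b`, and consequently
`|L₂(π)| = |L₂(α)| + ℓ(α)(a-1)b + 2·C(a,2)·C(b,2)`. -/
theorem L2count_21_alpha_iota (a b : ℕ) (α : Equiv.Perm (Fin a))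
    (π : Equiv.Perm (Fin (a + b)))
    (hπ : ∀ i : Fin (a + b),
      ((π i : Fin (a + b)) : ℕ) =
        if h : (i : ℕ) < a then ((α ⟨(i : ℕ), h⟩ : Fin a) : ℕ) + b else (i : ℕ) - a) :
    I2count (a + b) π =
      I2count a α + invCount a α * (a - 2) * b + 2 * Nat.choose a 2 * Nat.choose b 2 ∧
    I3count (a + b) π = I3count a α + invCount a α * b ∧
    I2count (a + b) π + I3count (a + b) π =
      (I2count a α + I3count a α) + invCount a α * (a - 1) * b +
        2 * Nat.choose a 2 * Nat.choose b 2 := by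
  have hv1 : ∀ i : Fin a, ((π (Fin.castAdd b i)) : ℕ) = (α i : ℕ) + b := by
    intro i
    have h := hπ (Fin.castAdd b i)
    rw [Fin.coe_castAdd] at h
    rw [dif_pos i.isLt] at h
    simpa using h
  have hv2 : ∀ j : Fin b, ((π (Fin.natAdd a j)) : ℕ) = (j : ℕ) := by
    intro j
    have h := hπ (Fin.natAdd a j)
    rw [Fin.coe_natAdd] at h
    rw [dif_neg (by omega)] at h
    omega
  have c1 : ∀ (i : Fin a) (j : Fin b), (i : ℕ) < a + (j : ℕ) :=
    fun i j => lt_of_lt_of_le i.isLt (Nat.le_add_right a j)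
  have c2 : ∀ (j : Fin b) (m : ℕ), (j : ℕ) < m + b :=
    fun j m => lt_of_lt_of_le j.isLt (Nat.le_add_left b m)
  have c3 : ∀ (j : Fin b) (i : Fin a), ¬(a + (j : ℕ) < (i : ℕ)) :=
    fun j i h => absurd i.isLt (by omega)
  have c4 : ∀ (m : ℕ) (j : Fin b), ¬(m + b < (j : ℕ)) :=
    fun m j h => absurd j.isLt (by omega)
  have c5 : ∀ (p q : ℕ) (R : Prop), (p < q ∧ q < p ∧ R) ↔ False := by
    intro p q R
    constructor
    · rintro ⟨h1, h2, -⟩; omega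
    · exact False.elim
  have c6 : ∀ (p q : ℕ), (p < q ∧ q < p) ↔ False := by
    intro p q
    constructor
    · rintro ⟨h1, h2⟩; omega
    · exact False.elim
  have d1 : ∀ (i : Fin a) (j : Fin b), Fin.castAdd b i ≠ Fin.natAdd a j := by
    intro i j h
    have := congrArg Fin.val h
    rw [Fin.coe_castAdd, Fin.coe_natAdd] at this
    have := i.isLt; omega
  have d2 : ∀ (i : Fin a) (j : Fin b), Fin.natAdd a j ≠ Fin.castAdd b i :=
    fun i j h => d1 i j h.symm
  have d3 : ∀ (i j : Fin a), Fin.castAdd b i = Fin.castAdd b j ↔ i = j := by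
    intro i j
    constructor
    · intro h; ext; have := congrArg Fin.val h; simpa using this
    · rintro rfl; rfl
  have d4 : ∀ (i j : Fin b), Fin.natAdd a i = Fin.natAdd a j ↔ i = j := by
    intro i j
    constructor
    · intro h; ext; have := congrArg Fin.val h
      rw [Fin.coe_natAdd, Fin.coe_natAdd] at this; omega
    · rintro rfl; rfl
  have key2 : I2count (a + b) π =
      I2count a α + invCount a α * (a - 2) * b + 2 * Nat.choose a 2 * Nat.choose b 2 := by
      unfold I2count invCount
      rw [Finset.card_filter, Finset.card_filter, Finset.card_filter]
      simp only [Fintype.sum_prod_type, Fin.sum_univ_add, Fin.lt_def, Fin.coe_castAdd,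
        Fin.coe_natAdd, hv1, hv2, pair_inter, d1, d2, d3, d4, ne_eq,
        Nat.add_lt_add_iff_right, Nat.add_lt_add_iff_left,
        c1, c2, c3, c4, c5, c6, not_false_eq_true, true_and, and_true, false_and, and_false,
        if_false, if_true,
        Finset.sum_const_zero, add_zero, zero_add, Finset.sum_const, Finset.card_univ,
        Fintype.card_fin, smul_eq_mul, mul_ite, mul_one, mul_zero,
        Finset.sum_mul, ite_mul, one_mul, zero_mul, Finset.sum_add_distrib]
      have hBC :
          ((∑ x : Fin a, b * ∑ x_1 : Fin a, ∑ x_2 : Fin a,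
              if ((x_1:ℕ) < (x_2:ℕ) ∧ ((α x_2 : Fin a):ℕ) < ((α x_1 : Fin a):ℕ)) ∧ (x:ℕ) < (x_1:ℕ) ∧ ¬x = x_1 ∧ ¬x = x_2 then 1 else 0) +
            ∑ x : Fin a, ∑ x_1 : Fin a, ∑ x_2 : Fin a,
              if ((x:ℕ) < (x_1:ℕ) ∧ ((α x_1 : Fin a):ℕ) < ((α x : Fin a):ℕ)) ∧ (x:ℕ) < (x_2:ℕ) ∧ ¬x = x_2 ∧ ¬x_1 = x_2 then b else 0) =
          ∑ x : Fin a, ∑ x_1 : Fin a, if (x:ℕ) < (x_1:ℕ) ∧ ((α x_1 : Fin a):ℕ) < ((α x : Fin a):ℕ) then (a - 2) * b else 0 := by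
        have e1 : (∑ x : Fin a, b * ∑ x_1 : Fin a, ∑ x_2 : Fin a,
            if ((x_1:ℕ) < (x_2:ℕ) ∧ ((α x_2 : Fin a):ℕ) < ((α x_1 : Fin a):ℕ)) ∧ (x:ℕ) < (x_1:ℕ) ∧ ¬x = x_1 ∧ ¬x = x_2 then 1 else 0) =
            ∑ x_1 : Fin a, ∑ x_2 : Fin a, ∑ x : Fin a,
              b * if ((x_1:ℕ) < (x_2:ℕ) ∧ ((α x_2 : Fin a):ℕ) < ((α x_1 : Fin a):ℕ)) ∧ (x:ℕ) < (x_1:ℕ) ∧ ¬x = x_1 ∧ ¬x = x_2 then 1 else 0 := by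
          simp only [Finset.mul_sum]
          rw [Finset.sum_comm]
          exact Finset.sum_congr rfl fun u _ => Finset.sum_comm
        rw [e1, ← Finset.sum_add_distrib]
        refine Finset.sum_congr rfl fun u _ => ?_
        rw [← Finset.sum_add_distrib]
        refine Finset.sum_congr rfl fun v _ => ?_
        by_cases hP : (u : ℕ) < (v : ℕ) ∧ ((α v : Fin a) : ℕ) < ((α u : Fin a) : ℕ)
        · simp only [hP, true_and, if_true]
          have e2 : (∑ x : Fin a,
              b * if (x : ℕ) < (u : ℕ) ∧ ¬x = u ∧ ¬x = v then (1:ℕ) else 0) =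
              b * ∑ x : Fin a, if (x : ℕ) < (u : ℕ) ∧ ¬x = u ∧ ¬x = v then (1:ℕ) else 0 :=
            (Finset.mul_sum _ _ _).symm
          have e3 : (∑ x : Fin a,
              if (u : ℕ) < (x : ℕ) ∧ ¬u = x ∧ ¬v = x then b else 0) =
              b * ∑ x : Fin a, if (u : ℕ) < (x : ℕ) ∧ ¬u = x ∧ ¬v = x then (1:ℕ) else 0 := by
            rw [Finset.mul_sum]
            exact Finset.sum_congr rfl fun x _ => by rw [mul_ite, mul_one, mul_zero]
          rw [e2, e3, ← Nat.mul_add, count_aux u v hP.1, Nat.mul_comm]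
        · simp only [hP, false_and, if_false, Finset.sum_const_zero, Nat.mul_zero, Nat.add_zero]
      have hD : (∑ x : Fin a, ∑ x_1 : Fin b, ∑ x_2 : Fin a, ∑ x_3 : Fin b,
          if (x:ℕ) < (x_2:ℕ) ∧ ¬x = x_2 ∧ ¬x_1 = x_3 then 1 else 0) =
          2 * a.choose 2 * b.choose 2 := by
        have e1 : ∀ x : Fin a, (∑ x_1 : Fin b, ∑ x_2 : Fin a, ∑ x_3 : Fin b,
            if (x : ℕ) < (x_2:ℕ) ∧ ¬x = x_2 ∧ ¬x_1 = x_3 then (1:ℕ) else 0) =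
            ∑ x_2 : Fin a, ∑ x_1 : Fin b, ∑ x_3 : Fin b,
              if (x : ℕ) < (x_2:ℕ) ∧ ¬x = x_2 ∧ ¬x_1 = x_3 then (1:ℕ) else 0 :=
          fun x => Finset.sum_comm
        simp only [e1]
        have e2 : ∀ (x x_2 : Fin a), (∑ x_1 : Fin b, ∑ x_3 : Fin b,
            if (x : ℕ) < (x_2:ℕ) ∧ ¬x = x_2 ∧ ¬x_1 = x_3 then (1:ℕ) else 0) =
            if (x : ℕ) < (x_2 : ℕ) then b * b - b else 0 := by
          intro x x_2
          by_cases hC : (x : ℕ) < (x_2 : ℕ)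
          · have hne : ¬x = x_2 := by
              intro h
              rw [h] at hC
              omega
            simp only [hC, hne, not_false_eq_true, true_and, if_true]
            exact ne_count b
          · simp only [hC, false_and, if_false, Finset.sum_const_zero]
        simp only [e2]
        have e3 : ∀ (x x_2 : Fin a), (if (x : ℕ) < (x_2 : ℕ) then b * b - b else 0) =
            (if (x : ℕ) < (x_2 : ℕ) then (1:ℕ) else 0) * (b * b - b) := by
          intro x x_2
          rw [ite_mul, one_mul, zero_mul]
        simp only [e3, ← Finset.sum_mul]
        rw [pairs_count a]
        have hb : b * b - b = 2 * b.choose 2 := by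
          have := two_mul_choose_two_s9 b
          omega
        rw [hb]
        ring
      omega
  have key3 : I3count (a + b) π = I3count a α + invCount a α * b := by
      unfold I3count invCount
      rw [Finset.card_filter, Finset.card_filter, Finset.card_filter]
      simp only [Fintype.sum_prod_type, Fin.sum_univ_add, Fin.lt_def, Fin.coe_castAdd,
        Fin.coe_natAdd, hv1, hv2, Nat.add_lt_add_iff_right, Nat.add_lt_add_iff_left,
        c1, c2, c3, c5, true_and, and_true, false_and, and_false, if_false, if_true,
        Finset.sum_const_zero, add_zero, zero_add, Finset.sum_const, Finset.card_univ,
        Fintype.card_fin, smul_eq_mul, mul_ite, mul_one, mul_zero,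
        Finset.sum_mul, ite_mul, one_mul, zero_mul, Finset.sum_add_distrib]
  refine ⟨key2, key3, ?_⟩
  have hsmall : a ≤ 1 → invCount a α = 0 := by
    intro ha
    unfold invCount
    rw [Finset.card_filter]
    refine Finset.sum_eq_zero fun p _ => ?_
    rw [if_neg]
    rintro ⟨h1, h2⟩
    have hp1 := p.1.isLt
    have hp2 := p.2.isLt
    rw [Fin.lt_def] at h1
    omega
  rcases le_or_gt a 1 with ha | ha
  · have h0 := hsmall ha
    rw [key2, key3, h0]
    simp
    omega
  · have e : invCount a α * (a - 1) * b = invCount a α * (a - 2) * b + invCount a α * b := by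
      rw [show a - 1 = (a - 2) + 1 from by omega]
      ring
    omega
end

section
/- Every cycle in the graph G_π on reduced words of π (with edges given by single commutation moves and single long braid moves) contains an even number of long braid edges and an even number of commutation edges. -/
/-- extend a permutation of `Fin n` to `ℕ`. -/
def pext (n : ℕ) (ρ : Equiv.Perm (Fin n)) (x : ℕ) : ℕ :=
  if h : x < n then (ρ ⟨x, h⟩).1 else x

lemma pext_one (n x : ℕ) : pext n 1 x = x := by
  unfold pext; split <;> simp

lemma pext_mul (n : ℕ) (ρ σ : Equiv.Perm (Fin n)) (x : ℕ) :
    pext n (ρ * σ) x = pext n ρ (pext n σ x) := by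
  unfold pext
  by_cases h : x < n
  · rw [dif_pos h, dif_pos h, dif_pos (σ ⟨x, h⟩).2]
    simp [Equiv.Perm.mul_apply]
  · rw [dif_neg h, dif_neg h, dif_neg h]

lemma pext_inj {n : ℕ} {ρ : Equiv.Perm (Fin n)} {x y : ℕ}
    (h : pext n ρ x = pext n ρ y) : x = y := by
  unfold pext at h
  by_cases hx : x < n <;> by_cases hy : y < n
  · rw [dif_pos hx, dif_pos hy] at h
    have := ρ.injective (Fin.ext h)
    simpa [Fin.ext_iff] using this
  · rw [dif_pos hx, dif_neg hy] at h
    exact absurd h (by have := (ρ ⟨x, hx⟩).2; omega)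
  · rw [dif_neg hx, dif_pos hy] at h
    exact absurd h (by have := (ρ ⟨y, hy⟩).2; omega)
  · rwa [dif_neg hx, dif_neg hy] at h

lemma sgen_invalid {n m : ℕ} (h : ¬ (1 ≤ m ∧ m < n)) : sgen n m = 1 := dif_neg h

lemma pext_sgen {n m : ℕ} (h1 : 1 ≤ m) (h2 : m < n) (x : ℕ) :
    pext n (sgen n m) x = if x = m - 1 then m else if x = m then m - 1 else x := by
  unfold sgen
  rw [dif_pos ⟨h1, h2⟩]
  unfold pext
  by_cases hx : x < n
  · rw [dif_pos hx]
    simp only [Equiv.swap_apply_def, Fin.ext_iff]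
    split_ifs <;> simp_all <;> omega
  · rw [dif_neg hx]
    have : x ≠ m - 1 := by omega
    have : x ≠ m := by omega
    simp_all

lemma pext_sgen_fix {n m x : ℕ} (hx1 : x ≠ m - 1) (hx2 : x ≠ m) :
    pext n (sgen n m) x = x := by
  by_cases h : 1 ≤ m ∧ m < n
  · rw [pext_sgen h.1 h.2, if_neg hx1, if_neg hx2]
  · rw [sgen_invalid h, pext_one]

lemma perm_eq_of_pext {n : ℕ} {ρ σ : Equiv.Perm (Fin n)}
    (h : ∀ x, pext n ρ x = pext n σ x) : ρ = σ := by
  apply Equiv.ext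
  rintro ⟨x, hx⟩
  have := h x
  unfold pext at this
  rw [dif_pos hx, dif_pos hx] at this
  exact Fin.ext this

set_option maxHeartbeats 1000000 in
lemma sgen_comm {n a b : ℕ} (h : a + 1 < b ∨ b + 1 < a) :
    sgen n a * sgen n b = sgen n b * sgen n a := by
  by_cases ha : 1 ≤ a ∧ a < n
  · by_cases hb : 1 ≤ b ∧ b < n
    · apply perm_eq_of_pext
      intro x
      simp only [pext_mul, pext_sgen ha.1 ha.2, pext_sgen hb.1 hb.2]
      split_ifs <;> omega
    · rw [sgen_invalid hb, mul_one, one_mul]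
  · rw [sgen_invalid ha, mul_one, one_mul]

set_option maxHeartbeats 1000000 in
lemma sgen_braid {n j : ℕ} (h1 : 1 ≤ j) (h2 : j + 1 < n) :
    sgen n j * sgen n (j+1) * sgen n j = sgen n (j+1) * sgen n j * sgen n (j+1) := by
  apply perm_eq_of_pext
  intro x
  simp only [pext_mul, pext_sgen h1 (by omega : j < n), pext_sgen (by omega : 1 ≤ j + 1) h2,
    Nat.add_sub_cancel]
  split_ifs <;> omega

def invNum : List ℕ → ℕ
  | [] => 0
  | a :: t => t.countP (fun b => decide (b < a)) + invNum t

lemma countP_pair (p : ℕ → Bool) (a b : ℕ) (R : List ℕ) :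
    (b :: a :: R).countP p = (a :: b :: R).countP p := by
  simp [List.countP_cons]; omega

lemma countP_triple (p : ℕ → Bool) (a b c : ℕ) (R : List ℕ) :
    (c :: b :: a :: R).countP p = (a :: b :: c :: R).countP p := by
  simp [List.countP_cons]; omega

lemma invNum_append_congr (M M' : List ℕ)
    (hc : ∀ p : ℕ → Bool, M'.countP p = M.countP p)
    (hinv : (invNum M' : ZMod 2) = invNum M + 1) :
    ∀ L : List ℕ, (invNum (L ++ M') : ZMod 2) = invNum (L ++ M) + 1
  | [] => hinv
  | x :: L => by
    have ih := invNum_append_congr M M' hc hinv L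
    simp only [List.cons_append, invNum, List.countP_append, hc, List.append_eq]
    push_cast
    rw [ih]
    ring

lemma nat_parity_zmod {x y : ℕ} (h : (x + y) % 2 = 1) : (y : ZMod 2) = x + 1 := by
  have h2 : ((x + y : ℕ) : ZMod 2) = ((((x + y) % 2 : ℕ)) : ZMod 2) :=
    (ZMod.natCast_mod (x + y) 2).symm
  rw [h] at h2
  push_cast at h2
  revert h2
  generalize (x : ZMod 2) = u
  generalize (y : ZMod 2) = v
  revert u v
  decide

lemma ite_ne {a b : ℕ} (h : a ≠ b) :
    ((if a < b then 1 else 0) + (if b < a then 1 else 0) : ℕ) = 1 := by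
  split_ifs <;> omega

lemma invNum_flip2 {a b : ℕ} (h : a ≠ b) (L R : List ℕ) :
    (invNum (L ++ b :: a :: R) : ZMod 2) = invNum (L ++ a :: b :: R) + 1 := by
  apply invNum_append_congr _ _ (fun p => countP_pair p a b R)
  apply nat_parity_zmod
  simp only [invNum, List.countP_cons]
  rcases h.lt_or_gt with h' | h' <;> simp [h', Nat.not_lt.mpr (le_of_lt h')] <;> omega

lemma invNum_flip3 {a b c : ℕ} (hab : a ≠ b) (hac : a ≠ c) (hbc : b ≠ c) (L R : List ℕ) :
    (invNum (L ++ c :: b :: a :: R) : ZMod 2) = invNum (L ++ a :: b :: c :: R) + 1 := by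
  apply invNum_append_congr _ _ (fun p => countP_triple p a b c R)
  apply nat_parity_zmod
  simp only [invNum, List.countP_cons]
  rcases hab.lt_or_gt with h1 | h1 <;> rcases hac.lt_or_gt with h2 | h2 <;>
    rcases hbc.lt_or_gt with h3 | h3 <;>
    simp [h1, h2, h3, Nat.not_lt.mpr (le_of_lt h1), Nat.not_lt.mpr (le_of_lt h2),
      Nat.not_lt.mpr (le_of_lt h3)] <;> omega

def enc (x y : ℕ) : ℕ := Nat.pair (min x y) (max x y)

lemma enc_eq {x y u v : ℕ} (h : enc x y = enc u v) :
    (x = u ∧ y = v) ∨ (x = v ∧ y = u) := by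
  unfold enc at h
  rw [Nat.pair_eq_pair] at h
  rcases le_total x y with h1 | h1 <;> rcases le_total u v with h2 | h2 <;>
    simp [min_def, max_def, h1, h2] at h <;> omega

/-- the (encoded) pair of wires crossed by letter `m` after prefix permutation `ρ`. -/
def pcr (n : ℕ) (ρ : Equiv.Perm (Fin n)) (m : ℕ) : ℕ :=
  enc (pext n ρ (m - 1)) (pext n ρ m)

lemma pcr_fix {n : ℕ} (ρ σ : Equiv.Perm (Fin n)) {m : ℕ}
    (h1 : pext n σ (m - 1) = m - 1) (h2 : pext n σ m = m) :
    pcr n (ρ * σ) m = pcr n ρ m := by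
  unfold pcr
  rw [pext_mul, pext_mul, h1, h2]

def crossList (n : ℕ) : Equiv.Perm (Fin n) → List ℕ → List ℕ
  | _, [] => []
  | ρ, m :: t => pcr n ρ m :: crossList n (ρ * sgen n m) t

lemma wordProd_nil (n : ℕ) : wordProd n [] = 1 := rfl

lemma wordProd_cons (n m : ℕ) (t : List ℕ) :
    wordProd n (m :: t) = sgen n m * wordProd n t := by
  simp [wordProd]

lemma crossList_append (n : ℕ) (u v : List ℕ) : ∀ ρ : Equiv.Perm (Fin n),
    crossList n ρ (u ++ v) = crossList n ρ u ++ crossList n (ρ * wordProd n u) v := by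
  induction u with
  | nil => intro ρ; simp [crossList, wordProd_nil]
  | cons m t ih =>
    intro ρ
    simp only [List.cons_append, crossList, wordProd_cons, List.append_eq]
    rw [ih, ← mul_assoc]

lemma crossList_split2 (n : ℕ) (ρ : Equiv.Perm (Fin n)) (l : List ℕ) (a b : ℕ) (r : List ℕ) :
    crossList n ρ (l ++ a :: b :: r) =
      crossList n ρ l ++ pcr n (ρ * wordProd n l) a ::
        pcr n (ρ * wordProd n l * sgen n a) b ::
        crossList n (ρ * wordProd n l * sgen n a * sgen n b) r := by
  rw [crossList_append]
  simp [crossList, mul_assoc]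

lemma crossList_split3 (n : ℕ) (ρ : Equiv.Perm (Fin n)) (l : List ℕ) (a b c : ℕ) (r : List ℕ) :
    crossList n ρ (l ++ a :: b :: c :: r) =
      crossList n ρ l ++ pcr n (ρ * wordProd n l) a ::
        pcr n (ρ * wordProd n l * sgen n a) b ::
        pcr n (ρ * wordProd n l * sgen n a * sgen n b) c ::
        crossList n (ρ * wordProd n l * sgen n a * sgen n b * sgen n c) r := by
  rw [crossList_append]
  simp [crossList, mul_assoc]

/-- parity of `invNum ∘ crossList` flips under a commutation move. -/
lemma comm_flip {n : ℕ} {u v : List ℕ}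
    (hcm : ∃ l r a b, (a + 1 < b ∨ b + 1 < a) ∧ u = l ++ [a, b] ++ r ∧ v = l ++ [b, a] ++ r) :
    (invNum (crossList n 1 v) : ZMod 2) = invNum (crossList n 1 u) + 1 := by
  obtain ⟨l, r, a, b, hcond, hu, hv⟩ := hcm
  subst hu hv
  have e1 : (l ++ [a, b]) ++ r = l ++ a :: b :: r := by simp
  have e2 : (l ++ [b, a]) ++ r = l ++ b :: a :: r := by simp
  rw [e1, e2, crossList_split2, crossList_split2]
  set L := (1 : Equiv.Perm (Fin n)) * wordProd n l with hL
  have fixb1 : pext n (sgen n a) (b - 1) = b - 1 := pext_sgen_fix (by omega) (by omega)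
  have fixb2 : pext n (sgen n a) b = b := pext_sgen_fix (by omega) (by omega)
  have fixa1 : pext n (sgen n b) (a - 1) = a - 1 := pext_sgen_fix (by omega) (by omega)
  have fixa2 : pext n (sgen n b) a = a := pext_sgen_fix (by omega) (by omega)
  rw [pcr_fix L (sgen n a) fixb1 fixb2, pcr_fix L (sgen n b) fixa1 fixa2,
    mul_assoc L (sgen n b) (sgen n a), ← sgen_comm hcond, ← mul_assoc]
  have hne : pcr n L a ≠ pcr n L b := by
    intro h
    rcases enc_eq h with ⟨h1, h2⟩ | ⟨h1, h2⟩ <;>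
      [skip; skip] <;>
      · have e1 := pext_inj h1
        have e2 := pext_inj h2
        omega
  exact invNum_flip2 hne _ _

lemma braid_flip_one {n j : ℕ} (l r : List ℕ) (h1 : 1 ≤ j) (h2 : j + 1 < n) :
    (invNum (crossList n 1 (l ++ [j+1, j, j+1] ++ r)) : ZMod 2) =
      invNum (crossList n 1 (l ++ [j, j+1, j] ++ r)) + 1 := by
  have hjn : j < n := by omega
  have e1 : (l ++ [j, j+1, j]) ++ r = l ++ j :: (j+1) :: j :: r := by simp
  have e2 : (l ++ [j+1, j, j+1]) ++ r = l ++ (j+1) :: j :: (j+1) :: r := by simp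
  rw [e1, e2, crossList_split3, crossList_split3]
  set L := (1 : Equiv.Perm (Fin n)) * wordProd n l with hL
  clear_value L
  have v1 : pext n (sgen n j) (j-1) = j := by rw [pext_sgen h1 hjn]; simp
  have v2 : pext n (sgen n j) j = j - 1 := by
    rw [pext_sgen h1 hjn, if_neg (by omega), if_pos rfl]
  have v3 : pext n (sgen n j) (j+1) = j+1 := pext_sgen_fix (by omega) (by omega)
  have w1 : pext n (sgen n (j+1)) (j-1) = j-1 := pext_sgen_fix (by omega) (by omega)
  have w2 : pext n (sgen n (j+1)) j = j+1 := by
    rw [pext_sgen (by omega) h2, Nat.add_sub_cancel, if_pos rfl]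
  have w3 : pext n (sgen n (j+1)) (j+1) = j := by
    rw [pext_sgen (by omega) h2, Nat.add_sub_cancel, if_neg (by omega), if_pos rfl]
  have p1 : pcr n L j = enc (pext n L (j-1)) (pext n L j) := rfl
  have p2 : pcr n (L * sgen n j) (j+1) = enc (pext n L (j-1)) (pext n L (j+1)) := by
    unfold pcr
    rw [Nat.add_sub_cancel, pext_mul, pext_mul, v2, v3]
  have p3 : pcr n (L * sgen n j * sgen n (j+1)) j = enc (pext n L j) (pext n L (j+1)) := by
    unfold pcr
    rw [pext_mul, pext_mul, pext_mul, pext_mul, w1, w2, v1, v3]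
  have q1 : pcr n L (j+1) = enc (pext n L j) (pext n L (j+1)) := by
    unfold pcr
    rw [Nat.add_sub_cancel]
  have q2 : pcr n (L * sgen n (j+1)) j = enc (pext n L (j-1)) (pext n L (j+1)) := by
    unfold pcr
    rw [pext_mul, pext_mul, w1, w2]
  have q3 : pcr n (L * sgen n (j+1) * sgen n j) (j+1) =
      enc (pext n L (j-1)) (pext n L j) := by
    unfold pcr
    rw [Nat.add_sub_cancel, pext_mul, pext_mul, pext_mul, pext_mul, v2, w1, v3, w3]
  have hb : sgen n j * (sgen n (j+1) * sgen n j) = sgen n (j+1) * (sgen n j * sgen n (j+1)) := by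
    simpa [mul_assoc] using sgen_braid h1 h2
  have hperm : L * sgen n (j+1) * sgen n j * sgen n (j+1) = L * sgen n j * sgen n (j+1) * sgen n j := by
    simp only [mul_assoc]
    rw [hb]
  rw [p1, p2, p3, q1, q2, q3, hperm]
  have dAB : pext n L (j-1) ≠ pext n L j := fun h => by have := pext_inj h; omega
  have dAC : pext n L (j-1) ≠ pext n L (j+1) := fun h => by have := pext_inj h; omega
  have dBC : pext n L j ≠ pext n L (j+1) := fun h => by have := pext_inj h; omega
  apply invNum_flip3
  · intro h; rcases enc_eq h with ⟨e1, e2⟩ | ⟨e1, e2⟩ <;> omega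
  · intro h; rcases enc_eq h with ⟨e1, e2⟩ | ⟨e1, e2⟩ <;> omega
  · intro h; rcases enc_eq h with ⟨e1, e2⟩ | ⟨e1, e2⟩ <;> omega

/-- parity of `invNum ∘ crossList` flips under a braid move on a word. -/
lemma braid_flip {n : ℕ} {u v : List ℕ} (hword : ∀ j ∈ u, 1 ≤ j ∧ j < n)
    (hbm : ∃ l r j, (u = l ++ [j, j+1, j] ++ r ∧ v = l ++ [j+1, j, j+1] ++ r) ∨
      (u = l ++ [j+1, j, j+1] ++ r ∧ v = l ++ [j, j+1, j] ++ r)) :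
    (invNum (crossList n 1 v) : ZMod 2) = invNum (crossList n 1 u) + 1 := by
  obtain ⟨l, r, j, hc⟩ := hbm
  have hsym : ∀ x y : ZMod 2, x = y + 1 → y = x + 1 := by decide
  rcases hc with ⟨hu, hv⟩ | ⟨hu, hv⟩
  · have h1 : 1 ≤ j := (hword j (by subst hu; simp)).1
    have h2 : j + 1 < n := (hword (j+1) (by subst hu; simp)).2
    subst hu hv
    exact braid_flip_one l r h1 h2
  · have h1 : 1 ≤ j := (hword j (by subst hu; simp)).1
    have h2 : j + 1 < n := (hword (j+1) (by subst hu; simp)).2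
    subst hu hv
    exact hsym _ _ (braid_flip_one l r h1 h2)


lemma comm_sum {u v : List ℕ}
    (h : ∃ l r a b, (a + 1 < b ∨ b + 1 < a) ∧ u = l ++ [a, b] ++ r ∧ v = l ++ [b, a] ++ r) :
    v.sum = u.sum := by
  obtain ⟨l, r, a, b, _, hu, hv⟩ := h
  subst hu hv
  simp [List.sum_append]
  omega

lemma braid_sum {u v : List ℕ}
    (h : ∃ l r j, (u = l ++ [j, j+1, j] ++ r ∧ v = l ++ [j+1, j, j+1] ++ r) ∨
      (u = l ++ [j+1, j, j+1] ++ r ∧ v = l ++ [j, j+1, j] ++ r)) :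
    v.sum = u.sum + 1 ∨ u.sum = v.sum + 1 := by
  obtain ⟨l, r, j, hc⟩ := h
  rcases hc with ⟨hu, hv⟩ | ⟨hu, hv⟩ <;> subst hu hv <;> simp [List.sum_append] <;> omega

lemma telescope (f g : ℕ → ZMod 2) :
    ∀ k : ℕ, (∀ i < k, f (i + 1) = f i + g i) → f k = f 0 + ∑ i ∈ Finset.range k, g i := by
  intro k
  induction k with
  | zero => simp
  | succ m ih =>
    intro h
    rw [Finset.sum_range_succ, h m (Nat.lt_succ_self m), ih (fun i hi => h i (by omega))]
    ring


/-- every cycle in `G_π` has an even number of long braid edges and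
an even number of commutation edges. -/
theorem cycle_even_moves (n : ℕ) (π : Equiv.Perm (Fin n)) (k : ℕ) (w : ℕ → List ℕ)
    (hred : ∀ i ≤ k, IsReducedWord n π (w i))
    (hstep : ∀ i < k, CommMove (w i) (w (i + 1)) ∨ BraidMove (w i) (w (i + 1)))
    (hclosed : w k = w 0) :
    Even (Nat.card {i : Fin k // BraidMove (w i.1) (w (i.1 + 1))}) ∧
    Even (Nat.card {i : Fin k // CommMove (w i.1) (w (i.1 + 1))}) := by

  classical
  set B : ℕ → Prop := fun i => BraidMove (w i) (w (i + 1)) with hB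
  set C : ℕ → Prop := fun i => CommMove (w i) (w (i + 1)) with hC
  -- a step cannot be both a commutation and a braid move
  have hnotboth : ∀ i, ¬ (C i ∧ B i) := by
    rintro i ⟨hc, hb⟩
    have h1 := comm_sum hc
    have h2 := braid_sum hb
    omega
  -- invariant 1: sum of letters mod 2 tracks braid moves
  have step1 : ∀ i < k, ((w (i+1)).sum : ZMod 2) =
      ((w i).sum : ZMod 2) + (if B i then 1 else 0) := by
    intro i hi
    rcases hstep i hi with hc | hb
    · rw [if_neg (fun hb => hnotboth i ⟨hc, hb⟩), add_zero, comm_sum hc]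
    · rw [if_pos hb]
      rcases braid_sum hb with h | h
      · rw [h]; push_cast; ring
      · have : ((w i).sum : ZMod 2) = ((w (i+1)).sum : ZMod 2) + 1 := by rw [h]; push_cast; ring
        revert this
        generalize ((w i).sum : ZMod 2) = x
        generalize ((w (i+1)).sum : ZMod 2) = y
        revert x y
        decide
  -- invariant 2: crossing inversions mod 2 flip at every step
  have step2 : ∀ i < k, (invNum (crossList n 1 (w (i+1))) : ZMod 2) =
      (invNum (crossList n 1 (w i)) : ZMod 2) + 1 := by
    intro i hi
    rcases hstep i hi with hc | hb
    · exact comm_flip hc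
    · exact braid_flip ((hred i (le_of_lt hi)).1) hb
  have t1 := telescope (fun i => ((w i).sum : ZMod 2)) (fun i => if B i then 1 else 0) k step1
  have t2 := telescope (fun i => (invNum (crossList n 1 (w i)) : ZMod 2)) (fun _ => 1) k step2
  simp only [hclosed] at t1 t2
  have hsum1 : ∑ i ∈ Finset.range k, (if B i then (1 : ZMod 2) else 0) = 0 := by
    have := t1.symm
    rwa [left_eq_add] at t1
  have hsum2 : ((k : ℕ) : ZMod 2) = 0 := by
    rw [Finset.sum_const, Finset.card_range, nsmul_eq_mul, mul_one] at t2
    rwa [left_eq_add] at t2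
  -- braid edge count over range k is even
  have hcardB : 2 ∣ ((Finset.range k).filter B).card := by
    rw [← ZMod.natCast_eq_zero_iff, ← Finset.sum_boole]
    exact hsum1
  have hk : 2 ∣ k := (ZMod.natCast_eq_zero_iff k 2).1 hsum2
  -- comm edge count: complement within range k
  have hsplit : ((Finset.range k).filter C).card + ((Finset.range k).filter B).card = k := by
    have h1 : (Finset.range k).filter C = (Finset.range k).filter (fun i => ¬ B i) := by
      apply Finset.filter_congr
      intro i hi
      simp only [Finset.mem_range] at hi
      constructor
      · intro hc hb; exact hnotboth i ⟨hc, hb⟩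
      · intro hnb; rcases hstep i hi with hc | hb; exacts [hc, absurd hb hnb]
    rw [h1, add_comm, Finset.card_filter_add_card_filter_not, Finset.card_range]
  have hcardC : 2 ∣ ((Finset.range k).filter C).card := by omega
  -- convert Nat.card of subtypes to filtered cards over range k
  have conv1 : ∀ p : ℕ → Prop, Nat.card {i : Fin k // p i.1} = ((Finset.range k).filter p).card := by
    intro p
    rw [Nat.card_eq_fintype_card, Fintype.card_subtype, Finset.card_filter, Finset.card_filter]
    exact Fin.sum_univ_eq_sum_range (fun i => if p i then 1 else 0) k
  constructor
  · rw [show (fun i : Fin k => BraidMove (w i.1) (w (i.1 + 1))) = fun i : Fin k => B i.1 from rfl]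
    rw [conv1 B]
    exact even_iff_two_dvd.mpr hcardB
  · rw [show (fun i : Fin k => CommMove (w i.1) (w (i.1 + 1))) = fun i : Fin k => C i.1 from rfl]
    rw [conv1 C]
    exact even_iff_two_dvd.mpr hcardC
end
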